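/- Let Γ be a cancellation monoid with neutral element e and A = ⊕_{γ∈Γ} A_γ a Γ-graded ring whose degree-e part A_e is a local ring in the classical sense. Let 𝔐 be the sum of all proper graded two-sided ideals of A. Then every homogeneous element a ∈ A_γ with a ∉ 𝔐 is invertible with homogeneous inverse (there is a homogeneous b ∈ A with ab = ba = 1); consequently 𝔐 coincides with the two-sided ideal of A generated by all non-invertible homogeneous elements of A. -/
import Mathlib


section

variable {Γ : Type*} [AddCancelMonoid Γ] [DecidableEq Γ]
variable {A : Type*} [Ring A] (𝒜 : Γ → AddSubgroup A) [GradedRing 𝒜]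

/-- A two-sided ideal of `A` is graded if it contains all homogeneous components of each
of its elements (equivalently, it is generated by homogeneous elements). -/
def TwoSidedIdeal.IsGraded (I : TwoSidedIdeal A) : Prop :=
  ∀ a ∈ I, ∀ γ : Γ, (DirectSum.decompose 𝒜 a γ : A) ∈ I

private lemma swap_add_eq_zero' {a b : Γ} (h : a + b = 0) : b + a = 0 :=
  add_left_cancel (a := a) (by rw [← add_assoc, h, zero_add, add_zero])

private lemma idem_eq_zero_or_one' {R : Type*} [Ring R] [IsLocalRing R] {e : R}
    (he : e * e = e) : e = 0 ∨ e = 1 := by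
  rcases IsLocalRing.isUnit_or_isUnit_of_add_one (a := e) (b := 1 - e) (by abel) with h | h
  · right
    obtain ⟨u, hu⟩ := h
    have h1 : (↑u⁻¹ : R) * (e * e) = ↑u⁻¹ * e := by rw [he]
    rwa [← hu, ← mul_assoc, u.inv_mul, one_mul, hu] at h1
  · left
    obtain ⟨u, hu⟩ := h
    have h1 : (↑u⁻¹ : R) * ((1 - e) * e) = ↑u⁻¹ * 0 := by
      rw [sub_mul, one_mul, he, sub_self]
    rwa [← hu, ← mul_assoc, u.inv_mul, one_mul, mul_zero] at h1

private lemma key_inv [IsLocalRing (𝒜 0)] (γ : Γ) (a : A) (ha : a ∈ 𝒜 γ) (ha0 : a ≠ 0)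
    (hnot : a ∉ sSup {I : TwoSidedIdeal A | TwoSidedIdeal.IsGraded 𝒜 I ∧ I ≠ ⊤}) :
    ∃ b : A, (b ≠ 0 ∧ ∃ γ' : Γ, b ∈ 𝒜 γ') ∧ a * b = 1 ∧ b * a = 1 := by
  classical
  set gens : Set A := {z | ∃ (α β : Γ) (x y : A), x ∈ 𝒜 α ∧ y ∈ 𝒜 β ∧ z = x * a * y} with hgens
  set J : AddSubgroup A := AddSubgroup.closure gens with hJdef
  have hmem_gens : ∀ {α β : Γ} {x y : A}, x ∈ 𝒜 α → y ∈ 𝒜 β → x * a * y ∈ J := by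
    intro α β x y hx hy
    exact AddSubgroup.subset_closure ⟨α, β, x, y, hx, hy, rfl⟩
  have hleft : ∀ (r z : A), z ∈ J → r * z ∈ J := by
    intro r z hz
    refine AddSubgroup.closure_induction ?_ ?_ ?_ ?_ hz
    · rintro g ⟨α, β, x, y, hx, hy, rfl⟩
      rw [← DirectSum.sum_support_decompose 𝒜 r, Finset.sum_mul]
      refine AddSubgroup.sum_mem _ fun i _ => ?_
      have h1 : (DirectSum.decompose 𝒜 r i : A) * (x * a * y)
          = ((DirectSum.decompose 𝒜 r i : A) * x) * a * y := by noncomm_ring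
      rw [h1]
      exact hmem_gens (SetLike.mul_mem_graded (SetLike.coe_mem _) hx) hy
    · simpa using J.zero_mem
    · intro p q _ _ hp hq
      rw [mul_add]; exact J.add_mem hp hq
    · intro p _ hp
      rw [mul_neg]; exact J.neg_mem hp
  have hright : ∀ (r z : A), z ∈ J → z * r ∈ J := by
    intro r z hz
    refine AddSubgroup.closure_induction ?_ ?_ ?_ ?_ hz
    · rintro g ⟨α, β, x, y, hx, hy, rfl⟩
      rw [← DirectSum.sum_support_decompose 𝒜 r, Finset.mul_sum]
      refine AddSubgroup.sum_mem _ fun i _ => ?_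
      have h1 : (x * a * y) * (DirectSum.decompose 𝒜 r i : A)
          = x * a * (y * (DirectSum.decompose 𝒜 r i : A)) := by noncomm_ring
      rw [h1]
      exact hmem_gens hx (SetLike.mul_mem_graded hy (SetLike.coe_mem _))
    · simpa using J.zero_mem
    · intro p q _ _ hp hq
      rw [add_mul]; exact J.add_mem hp hq
    · intro p _ hp
      rw [neg_mul]; exact J.neg_mem hp
  have hgraded : ∀ z ∈ J, ∀ γ' : Γ, (DirectSum.decompose 𝒜 z γ' : A) ∈ J := by
    intro z hz γ'
    refine AddSubgroup.closure_induction ?_ ?_ ?_ ?_ hz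
    · rintro g ⟨α, β, x, y, hx, hy, rfl⟩
      have hg : x * a * y ∈ 𝒜 (α + γ + β) :=
        SetLike.mul_mem_graded (SetLike.mul_mem_graded hx ha) hy
      by_cases hd : α + γ + β = γ'
      · rw [DirectSum.decompose_of_mem_same 𝒜 (hd ▸ hg)]
        exact hmem_gens hx hy
      · rw [DirectSum.decompose_of_mem_ne 𝒜 hg hd]
        exact J.zero_mem
    · simpa using J.zero_mem
    · intro p q _ _ hp hq
      rw [DirectSum.decompose_add, DirectSum.add_apply, AddMemClass.coe_add]
      exact J.add_mem hp hq
    · intro p _ hp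
      rw [DirectSum.decompose_neg, DFinsupp.neg_apply, NegMemClass.coe_neg]
      exact J.neg_mem hp
  set I : TwoSidedIdeal A := TwoSidedIdeal.mk' J J.zero_mem
    (fun h1 h2 => J.add_mem h1 h2) (fun h => J.neg_mem h)
    (fun h => hleft _ _ h) (fun h => hright _ _ h) with hIdef
  have hmemI : ∀ {z : A}, z ∈ I ↔ z ∈ J := by
    intro z
    rw [hIdef, TwoSidedIdeal.mem_mk']
    rfl
  have haJ : a ∈ J := by
    have := hmem_gens (SetLike.one_mem_graded 𝒜) (SetLike.one_mem_graded 𝒜)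
    simpa using this
  have hItop : I = ⊤ := by
    by_contra hne
    have hIS : I ∈ {I : TwoSidedIdeal A | TwoSidedIdeal.IsGraded 𝒜 I ∧ I ≠ ⊤} :=
      ⟨fun z hz γ' => hmemI.2 (hgraded z (hmemI.1 hz) γ'), hne⟩
    exact hnot (le_sSup hIS (hmemI.2 haJ))
  have h1J : (1 : A) ∈ J := hmemI.1 ((TwoSidedIdeal.one_mem_iff I).2 hItop)
  have hunit : ∃ u : (𝒜 0), IsUnit u ∧ ∃ (α β : Γ) (x y : A),
      x ∈ 𝒜 α ∧ y ∈ 𝒜 β ∧ α + γ + β = 0 ∧ (u : A) = x * a * y := by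
    by_contra hcon
    push_neg at hcon
    have hnonunit : ∀ z ∈ J, ¬ IsUnit ((DirectSum.decompose 𝒜 z) 0) := by
      intro z hz
      refine AddSubgroup.closure_induction ?_ ?_ ?_ ?_ hz
      · rintro g ⟨α, β, x, y, hx, hy, rfl⟩
        have hg : x * a * y ∈ 𝒜 (α + γ + β) :=
          SetLike.mul_mem_graded (SetLike.mul_mem_graded hx ha) hy
        by_cases hd : α + γ + β = 0
        · intro hu
          exact hcon _ hu α β x y hx hy hd
            (DirectSum.decompose_of_mem_same 𝒜 (hd ▸ hg))
        · rw [show (DirectSum.decompose 𝒜 (x * a * y)) 0 = 0 from Subtype.ext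
            (DirectSum.decompose_of_mem_ne 𝒜 hg hd)]
          exact not_isUnit_zero
      · rw [show (DirectSum.decompose 𝒜 (0 : A)) 0 = 0 by simp]
        exact not_isUnit_zero
      · intro p q _ _ hp hq
        rw [show (DirectSum.decompose 𝒜 (p + q)) 0
            = (DirectSum.decompose 𝒜 p) 0 + (DirectSum.decompose 𝒜 q) 0 by
          rw [DirectSum.decompose_add, DirectSum.add_apply]]
        intro h
        obtain ⟨s, hs⟩ := h
        have h1 : (DirectSum.decompose 𝒜 p) 0 * ↑s⁻¹ + (DirectSum.decompose 𝒜 q) 0 * ↑s⁻¹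
            = 1 := by rw [← add_mul, ← hs, Units.mul_inv]
        rcases IsLocalRing.isUnit_or_isUnit_of_add_one h1 with h2 | h2
        · refine hp ?_
          have h3 := h2.mul s.isUnit
          rwa [mul_assoc, Units.inv_mul, mul_one] at h3
        · refine hq ?_
          have h3 := h2.mul s.isUnit
          rwa [mul_assoc, Units.inv_mul, mul_one] at h3
      · intro p _ hp
        intro h
        apply hp
        have h2 : (DirectSum.decompose 𝒜 (-p)) 0 = -((DirectSum.decompose 𝒜 p) 0) := by
          rw [DirectSum.decompose_neg, DFinsupp.neg_apply]
        rw [h2] at h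
        simpa using h.neg
    refine hnonunit 1 h1J ?_
    rw [show (DirectSum.decompose 𝒜 (1 : A)) 0 = 1 from Subtype.ext
      (DirectSum.decompose_of_mem_same 𝒜 (SetLike.one_mem_graded 𝒜))]
    exact isUnit_one
  obtain ⟨u, hu, α, β, x, y, hx, hy, hd, hcoe⟩ := hunit
  obtain ⟨v, rfl⟩ := hu
  set w : A := ((↑(v⁻¹) : ↥(𝒜 0)) : A) with hwdef
  have hw0 : w ∈ 𝒜 0 := SetLike.coe_mem _
  have h1 : (x * a * y) * w = 1 := by
    rw [← hcoe, hwdef]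
    exact_mod_cast congrArg Subtype.val v.mul_inv
  have h2 : w * (x * a * y) = 1 := by
    rw [← hcoe, hwdef]
    exact_mod_cast congrArg Subtype.val v.inv_mul
  have hA1ne0 : (1 : A) ≠ 0 := by
    intro h10
    exact ha0 (by rw [← mul_one a, h10, mul_zero])
  -- degree bookkeeping
  have hd1 : α + (γ + β) = 0 := by rw [← add_assoc]; exact hd
  have hd2 : (γ + β) + α = 0 := swap_add_eq_zero' hd1
  have hd3 : γ + (β + α) = 0 := by rw [← add_assoc]; exact hd2
  have hd4 : (β + α) + γ = 0 := swap_add_eq_zero' hd3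
  have hb' : y * w * x ∈ 𝒜 (β + α) := by
    have := SetLike.mul_mem_graded (SetLike.mul_mem_graded hy hw0) hx
    simpa using this
  have he0 : a * (y * w * x) ∈ 𝒜 0 := hd3 ▸ SetLike.mul_mem_graded ha hb'
  have hf0 : (y * w * x) * a ∈ 𝒜 0 := hd4 ▸ SetLike.mul_mem_graded hb' ha
  -- idempotency
  have heidem : (a * (y * w * x)) * (a * (y * w * x)) = a * (y * w * x) := by
    have hstep : (a * (y * w * x)) * (a * (y * w * x))
        = (a * y) * (w * (x * a * y)) * (w * x) := by noncomm_ring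
    rw [hstep, h2, mul_one]
    noncomm_ring
  have hfidem : ((y * w * x) * a) * ((y * w * x) * a) = (y * w * x) * a := by
    have hstep : ((y * w * x) * a) * ((y * w * x) * a)
        = (y * w) * ((x * a * y) * w) * (x * a) := by noncomm_ring
    rw [hstep, h1, mul_one]
    noncomm_ring
  -- e = a * b is an idempotent of the local ring (𝒜 0), and e ≠ 0
  have hab : a * (y * w * x) = 1 := by
    have := idem_eq_zero_or_one' (R := (𝒜 0)) (e := ⟨a * (y * w * x), he0⟩)
      (Subtype.ext heidem)
    rcases this with h | h
    · exfalso
      have he0' : a * (y * w * x) = 0 := congrArg Subtype.val h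
      have hx0 : x * (a * (y * w * x)) = x := by
        have : x * (a * (y * w * x)) = ((x * a * y) * w) * x := by noncomm_ring
        rw [this, h1, one_mul]
      rw [he0', mul_zero] at hx0
      apply hA1ne0
      rw [← h2, ← hx0]
      noncomm_ring
    · exact congrArg Subtype.val h
  have hba : (y * w * x) * a = 1 := by
    have := idem_eq_zero_or_one' (R := (𝒜 0)) (e := ⟨(y * w * x) * a, hf0⟩)
      (Subtype.ext hfidem)
    rcases this with h | h
    · exfalso
      have hf0' : (y * w * x) * a = 0 := congrArg Subtype.val h
      have hy0 : ((y * w * x) * a) * y = y := by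
        have : ((y * w * x) * a) * y = y * (w * (x * a * y)) := by noncomm_ring
        rw [this, h2, mul_one]
      rw [hf0', zero_mul] at hy0
      apply hA1ne0
      rw [← h1, ← hy0]
      noncomm_ring
    · exact congrArg Subtype.val h
  refine ⟨y * w * x, ⟨?_, ⟨β + α, hb'⟩⟩, hab, hba⟩
  intro hb0
  rw [hb0, zero_mul] at hba
  exact hA1ne0 hba.symm

/-- **Proposition 2.3(v).**  Let `A` be a `Γ`-graded ring whose degree-`0` part is a local
ring  in the classical sense, and let `𝔐` be the sum of all proper graded two-sided ideals
of `A`.  Then every homogeneous element `a ∈ A_γ` with `a ∉ 𝔐` is invertible with a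
homogeneous (two-sided) inverse; consequently `𝔐` coincides with the two-sided ideal of
`A` generated by all non-invertible homogeneous elements of `A`. -/
theorem homogeneous_not_mem_sSup_isUnit_and_sSup_eq_span [IsLocalRing (𝒜 0)] :
    (∀ (γ : Γ) (a : A), a ∈ 𝒜 γ → a ≠ 0 →
        a ∉ sSup {I : TwoSidedIdeal A | TwoSidedIdeal.IsGraded 𝒜 I ∧ I ≠ ⊤} →
        ∃ b : A, (b ≠ 0 ∧ ∃ γ' : Γ, b ∈ 𝒜 γ') ∧ a * b = 1 ∧ b * a = 1) ∧
    sSup {I : TwoSidedIdeal A | TwoSidedIdeal.IsGraded 𝒜 I ∧ I ≠ ⊤} =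
      TwoSidedIdeal.span {a : A | (a ≠ 0 ∧ ∃ γ : Γ, a ∈ 𝒜 γ) ∧ ¬IsUnit a} := by
  classical
  refine ⟨fun γ a ha ha0 hnot => key_inv 𝒜 γ a ha ha0 hnot, le_antisymm ?_ ?_⟩
  · -- sSup ≤ span
    refine sSup_le fun I hI => ?_
    intro z hz
    have hzc : ∀ γ : Γ, (DirectSum.decompose 𝒜 z γ : A) ∈
        TwoSidedIdeal.span {a : A | (a ≠ 0 ∧ ∃ γ : Γ, a ∈ 𝒜 γ) ∧ ¬IsUnit a} := by
      intro γ
      by_cases hc0 : (DirectSum.decompose 𝒜 z γ : A) = 0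
      · rw [hc0]; exact TwoSidedIdeal.zero_mem _
      · refine TwoSidedIdeal.subset_span ⟨⟨hc0, γ, SetLike.coe_mem _⟩, ?_⟩
        intro hcu
        apply hI.2
        rw [← TwoSidedIdeal.one_mem_iff]
        obtain ⟨c, hc⟩ := hcu
        have hmem : (DirectSum.decompose 𝒜 z γ : A) ∈ I := hI.1 z hz γ
        have : (↑c⁻¹ : A) * ((DirectSum.decompose 𝒜 z γ : A)) ∈ I :=
          I.mul_mem_left _ _ hmem
        rwa [← hc, Units.inv_mul] at this
    rw [← DirectSum.sum_support_decompose 𝒜 z]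
    exact Finset.sum_induction _ _ (fun u v hu hv => TwoSidedIdeal.add_mem _ hu hv)
      (TwoSidedIdeal.zero_mem _) fun γ _ => hzc γ
  · -- span ≤ sSup
    intro z hz
    rw [TwoSidedIdeal.mem_span_iff] at hz
    refine hz _ ?_
    rintro b ⟨⟨hb0, γ, hb⟩, hbu⟩
    show b ∈ sSup {I : TwoSidedIdeal A | TwoSidedIdeal.IsGraded 𝒜 I ∧ I ≠ ⊤}
    by_contra hbnot
    obtain ⟨c, ⟨hc0, _⟩, hbc, hcb⟩ := key_inv 𝒜 γ b hb hb0 hbnot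
    exact hbu ⟨⟨b, c, hbc, hcb⟩, rfl⟩

end
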